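/- arXiv:2507.07158 — 3 statements merged into one kernel-verified Lean document; each statement's English description precedes it below -/
import Mathlib

section
/- Equality case of the reverse Cauchy–Schwarz inequality: if X and Y are causal vectors in Minkowski spacetime ℝ^{1+n}, then η(X,Y)² = η(X,X)·η(Y,Y) holds if and only if X and Y are linearly dependent. -/
/-!
Write `Y = (b, v)`; causality forces `b ≠ 0`. Along the line `t ↦ X + t • Y` the form
`η(X + tY, X + tY)` is a quadratic in `t` with nonpositive leading and constant coefficients,
so a vanishing discriminant `η(X,Y)² - η(X,X) η(Y,Y)` makes it nonpositive everywhere.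
At `t = -X₀ / b` the vector `X + tY` has no time component, so there the form is the Euclidean
`‖X' + t v‖² ≥ 0`; hence that vector is zero and `X` is a multiple of `Y`.
-/

noncomputable def minkowski {n : ℕ} (v w : ℝ × EuclideanSpace ℝ (Fin n)) : ℝ :=
  -(v.1 * w.1) + (inner ℝ v.2 w.2 : ℝ)

def IsCausal {n : ℕ} (v : ℝ × EuclideanSpace ℝ (Fin n)) : Prop :=
  v ≠ 0 ∧ minkowski v v ≤ 0

lemma quadratic_nonpos_of_sq_eq_mul {a b c : ℝ} (ha : a ≤ 0) (hc : c ≤ 0) (h : b ^ 2 = a * c)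
    (t : ℝ) : c + 2 * b * t + a * t ^ 2 ≤ 0 := by
  rcases ha.lt_or_eq with ha | rfl
  · nlinarith [sq_nonneg (a * t + b)]
  · have hb : b = 0 := by simpa using h
    simpa [hb] using hc

section Minkowski

variable {n : ℕ}

lemma minkowski_comm (v w : ℝ × EuclideanSpace ℝ (Fin n)) : minkowski v w = minkowski w v := by
  simp only [minkowski, real_inner_comm, mul_comm]

lemma minkowski_smul_left (c : ℝ) (v w : ℝ × EuclideanSpace ℝ (Fin n)) :
    minkowski (c • v) w = c * minkowski v w := by
  simp only [minkowski, Prod.smul_fst, Prod.smul_snd, smul_eq_mul, real_inner_smul_left]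
  ring

lemma minkowski_add_smul_self (v w : ℝ × EuclideanSpace ℝ (Fin n)) (t : ℝ) :
    minkowski (v + t • w) (v + t • w) =
      minkowski v v + 2 * minkowski v w * t + minkowski w w * t ^ 2 := by
  simp only [minkowski, Prod.fst_add, Prod.snd_add, Prod.smul_fst, Prod.smul_snd, smul_eq_mul,
    inner_add_left, inner_add_right, real_inner_smul_left, real_inner_smul_right,
    real_inner_comm v.2 w.2]
  ring

lemma minkowski_self_of_fst_eq_zero {v : ℝ × EuclideanSpace ℝ (Fin n)} (hv : v.1 = 0) :
    minkowski v v = ‖v.2‖ ^ 2 := by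
  simp [minkowski, hv]

lemma IsCausal.fst_ne_zero {v : ℝ × EuclideanSpace ℝ (Fin n)} (hv : IsCausal v) : v.1 ≠ 0 := by
  intro h0
  have hnorm : ‖v.2‖ ^ 2 ≤ 0 := minkowski_self_of_fst_eq_zero h0 ▸ hv.2
  exact hv.1 (Prod.ext h0 (by simpa using hnorm))

lemma sq_minkowski_smul_left (c : ℝ) (w : ℝ × EuclideanSpace ℝ (Fin n)) :
    minkowski (c • w) w ^ 2 = minkowski (c • w) (c • w) * minkowski w w := by
  rw [minkowski_smul_left, minkowski_smul_left, minkowski_comm w (c • w), minkowski_smul_left]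
  ring

lemma exists_smul_eq_of_sq_minkowski_eq {v w : ℝ × EuclideanSpace ℝ (Fin n)}
    (hv : minkowski v v ≤ 0) (hw : IsCausal w)
    (heq : minkowski v w ^ 2 = minkowski v v * minkowski w w) : ∃ c : ℝ, c • w = v := by
  set t := -v.1 / w.1
  have htime : (v + t • w).1 = 0 := by
    simp only [Prod.fst_add, Prod.smul_fst, smul_eq_mul, t]
    field_simp [hw.fst_ne_zero]
    ring
  have hnonpos : ‖(v + t • w).2‖ ^ 2 ≤ 0 := by
    rw [← minkowski_self_of_fst_eq_zero htime, minkowski_add_smul_self]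
    exact quadratic_nonpos_of_sq_eq_mul hw.2 hv (by rw [heq, mul_comm]) t
  have hzero : v + t • w = 0 := Prod.ext htime (by simpa using hnonpos)
  exact ⟨-t, by rw [neg_smul]; exact (eq_neg_of_add_eq_zero_left hzero).symm⟩

end Minkowski

theorem reverse_cauchy_schwarz_equality_general {n : ℕ}
    (X Y : ℝ × EuclideanSpace ℝ (Fin n)) (hX : IsCausal X) (hY : IsCausal Y) :
    (minkowski X Y) ^ 2 = minkowski X X * minkowski Y Y ↔
      ¬ LinearIndependent ℝ ![X, Y] := by
  simp only [linearIndependent_fin2, Matrix.cons_val_one, Matrix.cons_val_zero, ne_eq,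
    hY.1, not_false_eq_true, true_and, not_forall, not_not]
  constructor
  · exact exists_smul_eq_of_sq_minkowski_eq hX.2 hY
  · rintro ⟨c, rfl⟩
    exact sq_minkowski_smul_left c Y

/-- Equality case of the reverse Cauchy–Schwarz inequality: for causal vectors `X`, `Y`
in Minkowski spacetime, `η(X,Y)² = η(X,X)·η(Y,Y)` iff `X` and `Y` are linearly dependent. -/
theorem reverse_cauchy_schwarz_equality {n : ℕ} (hn : 1 ≤ n)
    (X Y : ℝ × EuclideanSpace ℝ (Fin n)) (hX : IsCausal X) (hY : IsCausal Y) :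
    (minkowski X Y) ^ 2 = minkowski X X * minkowski Y Y ↔
      ¬ LinearIndependent ℝ ![X, Y] :=
  reverse_cauchy_schwarz_equality_general X Y hX hY
end

section
/- A vector T in Minkowski spacetime ℝ^{1+n} is past-directed timelike if and only if there exists a constant C > 0 such that η(T,X) ≥ C·‖X‖ for every future-directed causal vector X, where ‖X‖ is the Euclidean norm of X. -/
/-- The Euclidean norm on `ℝ^{1+n}`: `‖v‖ = √(v₀² + ‖v'‖²)`. -/
noncomputable def euclNorm {n : ℕ} (v : ℝ × EuclideanSpace ℝ (Fin n)) : ℝ :=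
  Real.sqrt (v.1 ^ 2 + ‖v.2‖ ^ 2)

/-- A vector is timelike if it is nonzero and `η(v,v) < 0`. -/
def IsTimelike {n : ℕ} (v : ℝ × EuclideanSpace ℝ (Fin n)) : Prop :=
  v ≠ 0 ∧ minkowski v v < 0

/-- A causal vector is future-directed if its time component is positive. -/
def IsFutureCausal {n : ℕ} (v : ℝ × EuclideanSpace ℝ (Fin n)) : Prop :=
  IsCausal v ∧ 0 < v.1

/-- A timelike vector is past-directed if its time component is negative. -/
def IsPastTimelike {n : ℕ} (v : ℝ × EuclideanSpace ℝ (Fin n)) : Prop :=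
  IsTimelike v ∧ v.1 < 0

/-!
Reverse Cauchy–Schwarz gives `η(T, X) ≥ (-T₀ - ‖T'‖) X₀` for future causal `X`, and `‖X‖ ≤ √2 X₀`
turns this into the bound with `C = (-T₀ - ‖T'‖) / √2`. Conversely, the bound makes `η(T, ·)`
positive on future causal vectors; testing it on `(‖T'‖, -T')`, or on `(1, 0)` when `T' = 0`,
gives `‖T'‖ < -T₀`.
-/

section Minkowski

variable {n : ℕ}

lemma minkowski_self (v : ℝ × EuclideanSpace ℝ (Fin n)) :
    minkowski v v = ‖v.2‖ ^ 2 - v.1 ^ 2 := by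
  rw [minkowski, real_inner_self_eq_norm_sq]
  ring

lemma isPastTimelike_iff {v : ℝ × EuclideanSpace ℝ (Fin n)} :
    IsPastTimelike v ↔ ‖v.2‖ < -v.1 := by
  rw [IsPastTimelike, IsTimelike, minkowski_self]
  constructor
  · rintro ⟨⟨-, hv⟩, hv₁⟩
    nlinarith [norm_nonneg v.2]
  · intro hv
    have hv₁ : v.1 < 0 := by linarith [norm_nonneg v.2]
    refine ⟨⟨fun h => by simp [h] at hv₁, ?_⟩, hv₁⟩
    nlinarith [norm_nonneg v.2]

lemma isFutureCausal_iff {v : ℝ × EuclideanSpace ℝ (Fin n)} :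
    IsFutureCausal v ↔ 0 < v.1 ∧ ‖v.2‖ ≤ v.1 := by
  rw [IsFutureCausal, IsCausal, minkowski_self]
  constructor
  · rintro ⟨⟨-, hv⟩, hv₁⟩
    exact ⟨hv₁, by nlinarith [norm_nonneg v.2]⟩
  · rintro ⟨hv₁, hv⟩
    refine ⟨⟨fun h => by simp [h] at hv₁, ?_⟩, hv₁⟩
    nlinarith [norm_nonneg v.2]

lemma euclNorm_pos {v : ℝ × EuclideanSpace ℝ (Fin n)} (hv : v.1 ≠ 0) : 0 < euclNorm v :=
  Real.sqrt_pos.2 (by positivity)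

lemma euclNorm_le_sqrt_two_mul {v : ℝ × EuclideanSpace ℝ (Fin n)} (hv : ‖v.2‖ ≤ v.1) :
    euclNorm v ≤ √2 * v.1 := by
  have hv₁ : 0 ≤ v.1 := (norm_nonneg _).trans hv
  rw [euclNorm, show √2 * v.1 = √(2 * v.1 ^ 2) by rw [Real.sqrt_mul zero_le_two, Real.sqrt_sq hv₁]]
  exact Real.sqrt_le_sqrt (by nlinarith [norm_nonneg v.2])

lemma neg_mul_sub_norm_mul_le_minkowski (T X : ℝ × EuclideanSpace ℝ (Fin n)) :
    -T.1 * X.1 - ‖T.2‖ * ‖X.2‖ ≤ minkowski T X := by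
  have := neg_le_of_abs_le (abs_real_inner_le_norm T.2 X.2)
  rw [minkowski]
  linarith

lemma IsPastTimelike.mul_euclNorm_le_minkowski {T X : ℝ × EuclideanSpace ℝ (Fin n)}
    (hT : IsPastTimelike T) (hX : IsFutureCausal X) :
    (-T.1 - ‖T.2‖) / √2 * euclNorm X ≤ minkowski T X := by
  rw [isPastTimelike_iff] at hT
  obtain ⟨-, hX⟩ := isFutureCausal_iff.1 hX
  have hC : 0 ≤ (-T.1 - ‖T.2‖) / √2 := div_nonneg (by linarith) (Real.sqrt_nonneg 2)
  calc (-T.1 - ‖T.2‖) / √2 * euclNorm X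
      ≤ (-T.1 - ‖T.2‖) / √2 * (√2 * X.1) :=
        mul_le_mul_of_nonneg_left (euclNorm_le_sqrt_two_mul hX) hC
    _ = -T.1 * X.1 - ‖T.2‖ * X.1 := by field_simp
    _ ≤ -T.1 * X.1 - ‖T.2‖ * ‖X.2‖ := by gcongr
    _ ≤ minkowski T X := neg_mul_sub_norm_mul_le_minkowski T X

lemma isPastTimelike_of_forall_minkowski_pos {T : ℝ × EuclideanSpace ℝ (Fin n)}
    (hT : ∀ X, IsFutureCausal X → 0 < minkowski T X) : IsPastTimelike T := by
  rw [isPastTimelike_iff]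
  by_cases hT₂ : T.2 = 0
  · have := hT (1, 0) (isFutureCausal_iff.2 ⟨one_pos, by simp⟩)
    simp only [minkowski, hT₂, norm_zero, inner_zero_right] at this ⊢
    linarith
  · have hpos : 0 < ‖T.2‖ := norm_pos_iff.2 hT₂
    have := hT (‖T.2‖, -T.2) (isFutureCausal_iff.2 ⟨hpos, by simp⟩)
    rw [minkowski, inner_neg_right, real_inner_self_eq_norm_sq] at this
    nlinarith

end Minkowski

theorem pastTimelike_iff_uniform_bound_general {n : ℕ}
    (T : ℝ × EuclideanSpace ℝ (Fin n)) :
    IsPastTimelike T ↔ ∃ C : ℝ, 0 < C ∧ ∀ X : ℝ × EuclideanSpace ℝ (Fin n),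
      IsFutureCausal X → C * euclNorm X ≤ minkowski T X := by
  constructor
  · intro hT
    have hC : 0 < (-T.1 - ‖T.2‖) / √2 := by
      have := isPastTimelike_iff.1 hT
      exact div_pos (by linarith) (by positivity)
    exact ⟨_, hC, fun X hX => hT.mul_euclNorm_le_minkowski hX⟩
  · rintro ⟨C, hC, hbound⟩
    refine isPastTimelike_of_forall_minkowski_pos fun X hX => ?_
    have hX₁ := (isFutureCausal_iff.1 hX).1
    exact (mul_pos hC (euclNorm_pos hX₁.ne')).trans_le (hbound X hX)

/-- A vector `T` in Minkowski spacetime `ℝ^{1+n}` is past-directed timelike if and only if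
there is `C > 0` with `η(T,X) ≥ C·‖X‖` for every future-directed causal vector `X`. -/
theorem pastTimelike_iff_uniform_bound {n : ℕ} (hn : 1 ≤ n)
    (T : ℝ × EuclideanSpace ℝ (Fin n)) :
    IsPastTimelike T ↔ ∃ C : ℝ, 0 < C ∧ ∀ X : ℝ × EuclideanSpace ℝ (Fin n),
      IsFutureCausal X → C * euclNorm X ≤ minkowski T X :=
  pastTimelike_iff_uniform_bound_general T
end

section
/- Causality property of the null distance in Minkowski spacetime ℝ^{1+n} with the time function τ(v) = v₀: if p ≤ q, then d̂_τ(p, q) = q₀ − p₀. -/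
open scoped Classical

/-- The causal relation: `p ≤ q` iff `p = q` or `q − p` is future-directed causal. -/
def causalLE {n : ℕ} (p q : ℝ × EuclideanSpace ℝ (Fin n)) : Prop :=
  p = q ∨ IsFutureCausal (q - p)

/-- `f`, together with `N ≥ 1`, encodes a piecewise causal path `p = f 0, f 1, …, f N = q`
in which every successive difference is a causal vector. -/
def IsPiecewiseCausalPath {n : ℕ} (f : ℕ → ℝ × EuclideanSpace ℝ (Fin n)) (N : ℕ)
    (p q : ℝ × EuclideanSpace ℝ (Fin n)) : Prop :=
  1 ≤ N ∧ f 0 = p ∧ f N = q ∧ ∀ i < N, IsCausal (f (i + 1) - f i)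

/-- The null length of a piecewise causal path, w.r.t. the time function `τ(v) = v₀`:
`∑ |(f(i+1))₀ − (f i)₀|`. -/
noncomputable def nullLength {n : ℕ} (f : ℕ → ℝ × EuclideanSpace ℝ (Fin n)) (N : ℕ) : ℝ :=
  ∑ i ∈ Finset.range N, |(f (i + 1)).1 - (f i).1|

/-- The null distance w.r.t. the time function `τ(v) = v₀`: the infimum of null lengths of
piecewise causal paths from `p` to `q`, with `d̂(p,p) = 0`. -/
noncomputable def nullDist {n : ℕ} (p q : ℝ × EuclideanSpace ℝ (Fin n)) : ℝ :=
  if _h : p = q then 0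
  else sInf {L : ℝ | ∃ (N : ℕ) (f : ℕ → ℝ × EuclideanSpace ℝ (Fin n)),
    IsPiecewiseCausalPath f N p q ∧ L = nullLength f N}

/-! By telescoping, the null length of any path from `p` to `q` is at least `q₀ − p₀`; when `q − p`
is causal this bound is attained by the one-segment path `p, q`. -/

section NullDistance

variable {n : ℕ}

theorem time_sub_le_nullLength (f : ℕ → ℝ × EuclideanSpace ℝ (Fin n)) (N : ℕ) :
    (f N).1 - (f 0).1 ≤ nullLength f N :=
  calc (f N).1 - (f 0).1 = ∑ i ∈ Finset.range N, ((f (i + 1)).1 - (f i).1) :=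
        (Finset.sum_range_sub (fun i => (f i).1) N).symm
    _ ≤ nullLength f N := Finset.sum_le_sum fun _ _ => le_abs_self _

def segmentPath (p q : ℝ × EuclideanSpace ℝ (Fin n)) : ℕ → ℝ × EuclideanSpace ℝ (Fin n) :=
  fun i => if i = 0 then p else q

theorem isPiecewiseCausalPath_segmentPath {p q : ℝ × EuclideanSpace ℝ (Fin n)}
    (h : IsCausal (q - p)) : IsPiecewiseCausalPath (segmentPath p q) 1 p q := by
  refine ⟨le_rfl, rfl, rfl, fun i hi => ?_⟩
  obtain rfl : i = 0 := Nat.lt_one_iff.mp hi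
  simpa [segmentPath] using h

theorem nullLength_segmentPath (p q : ℝ × EuclideanSpace ℝ (Fin n)) :
    nullLength (segmentPath p q) 1 = |q.1 - p.1| := by
  simp [nullLength, segmentPath]

theorem ne_of_isFutureCausal_sub {p q : ℝ × EuclideanSpace ℝ (Fin n)}
    (h : IsFutureCausal (q - p)) : p ≠ q := by
  rintro rfl
  exact h.1.1 (sub_self p)

theorem isLeast_nullLengths_of_isFutureCausal_sub {p q : ℝ × EuclideanSpace ℝ (Fin n)}
    (h : IsFutureCausal (q - p)) :
    IsLeast {L : ℝ | ∃ (N : ℕ) (f : ℕ → ℝ × EuclideanSpace ℝ (Fin n)),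
      IsPiecewiseCausalPath f N p q ∧ L = nullLength f N} (q.1 - p.1) := by
  refine ⟨⟨1, segmentPath p q, isPiecewiseCausalPath_segmentPath h.1, ?_⟩, ?_⟩
  · rw [nullLength_segmentPath, abs_of_pos (show 0 < q.1 - p.1 from h.2)]
  · rintro L ⟨N, f, ⟨-, rfl, rfl, -⟩, rfl⟩
    exact time_sub_le_nullLength f N

end NullDistance

theorem nullDist_eq_time_diff_of_causalLE_general {n : ℕ}
    (p q : ℝ × EuclideanSpace ℝ (Fin n)) (hpq : causalLE p q) :
    nullDist p q = q.1 - p.1 := by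
  rcases hpq with rfl | h
  · simp [nullDist]
  · rw [nullDist, dif_neg (ne_of_isFutureCausal_sub h)]
    exact (isLeast_nullLengths_of_isFutureCausal_sub h).csInf_eq

/-- Causality property of the null distance in Minkowski spacetime `ℝ^{1+n}` with the time
function `τ(v) = v₀`: if `p ≤ q` then `d̂_τ(p,q) = q₀ − p₀`. -/
theorem nullDist_eq_time_diff_of_causalLE {n : ℕ} (hn : 1 ≤ n)
    (p q : ℝ × EuclideanSpace ℝ (Fin n)) (hpq : causalLE p q) :
    nullDist p q = q.1 - p.1 :=
  nullDist_eq_time_diff_of_causalLE_general p q hpq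
end
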